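/- arXiv:2512.20562 — 3 statements merged into one kernel-verified Lean document; each statement's English description precedes it below -/
import Mathlib

section
/- Let d ≥ 2 and let p be a real polynomial in d variables that is homogeneous of degree n. Then there exist harmonic polynomials h_{n−2i}, each homogeneous of degree n−2i for i = 0, 1, …, ⌊n/2⌋, such that p(x) = Σ_{i=0}^{⌊n/2⌋} h_{n−2i}(x) for every x ∈ ℝ^d with ‖x‖ = 1; moreover, the polynomials h_{n−2i} with this property are unique. -/
/-!
Write `r² = ∑ⱼ xⱼ²`. For `q` homogeneous of degree `m`, `Δ(r² q) = (2d + 4m) q + r² Δq`.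
Applying `Δ` repeatedly to `c q + r² Δq = 0` with `c > 0` forces `q = 0`, so `q ↦ Δ(r² q)` is
injective, hence bijective, on the finite-dimensional space of homogeneous polynomials of degree
`m`. Choosing `q` with `Δ(r² q) = Δp` makes `p - r² q` harmonic, and induction on the degree gives
`p = ∑ᵢ r^{2i} h_{n-2i}`, which on the sphere is `∑ᵢ h_{n-2i}`. Conversely, a homogeneous
polynomial vanishing on the sphere vanishes everywhere by scaling, and if `∑ᵢ r^{2i} gᵢ = 0` then
`r² Q = -g₀` is harmonic for `Q = ∑ᵢ r^{2i} g_{i+1}`, so injectivity gives `Q = 0`, `g₀ = 0`, and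
induction does the rest.
-/

open MvPolynomial

/-- The Laplacian `Δp = Σ_j ∂²p/∂x_j²` of a multivariate polynomial. -/
noncomputable def mvLaplacian {d : ℕ} (p : MvPolynomial (Fin d) ℝ) : MvPolynomial (Fin d) ℝ :=
  ∑ j : Fin d, pderiv j (pderiv j p)

open Finset

namespace MvPolynomial.IsHomogeneous

variable {σ R : Type*} [CommSemiring R] {φ : MvPolynomial σ R} {n : ℕ}

theorem eval_smul (hφ : φ.IsHomogeneous n) (c : R) (x : σ → R) :
    eval (c • x) φ = c ^ n * eval x φ := by
  conv_lhs => rw [φ.as_sum]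
  conv_rhs => rw [φ.as_sum]
  simp only [map_sum, eval_monomial, mul_sum, Finsupp.prod, Pi.smul_apply, smul_eq_mul, mul_pow,
    prod_mul_distrib, prod_pow_eq_pow_sum]
  refine sum_congr rfl fun s hs => ?_
  rw [← hφ.degree_eq_sum_deg_support hs]
  ring

theorem eq_zero_of_forall_eval_sphere_eq_zero [Fintype σ] [Nonempty σ] {G : MvPolynomial σ ℝ}
    (hG : G.IsHomogeneous n) (h : ∀ x : σ → ℝ, ∑ j, x j ^ 2 = 1 → eval x G = 0) : G = 0 := by
  refine hG.eq_zero_of_forall_eval_eq_zero fun x => ?_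
  obtain ⟨t, u, hu, rfl⟩ : ∃ t : ℝ, ∃ u : σ → ℝ, ∑ j, u j ^ 2 = 1 ∧ x = t • u := by
    rcases eq_or_ne x 0 with rfl | hx
    · classical
      obtain ⟨i⟩ := ‹Nonempty σ›
      exact ⟨0, Pi.single i 1, by simp [sq, Pi.single_apply], by simp⟩
    · have hpos : 0 < ∑ j, x j ^ 2 := by
        obtain ⟨i, hi⟩ := Function.ne_iff.mp hx
        exact sum_pos' (fun j _ => sq_nonneg _) ⟨i, mem_univ _, pow_two_pos_of_ne_zero hi⟩
      refine ⟨√(∑ j, x j ^ 2), (√(∑ j, x j ^ 2))⁻¹ • x, ?_, ?_⟩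
      · simp only [Pi.smul_apply, smul_eq_mul, mul_pow, ← mul_sum, inv_pow,
          Real.sq_sqrt hpos.le, inv_mul_cancel₀ hpos.ne']
      · rw [smul_smul, mul_inv_cancel₀ (Real.sqrt_pos.mpr hpos).ne', one_smul]
  rw [hG.eval_smul, h u hu, mul_zero]

end MvPolynomial.IsHomogeneous

section

variable {d : ℕ}

noncomputable def mvLaplacianₗ (d : ℕ) : MvPolynomial (Fin d) ℝ →ₗ[ℝ] MvPolynomial (Fin d) ℝ where
  toFun := mvLaplacian
  map_add' p q := by simp [mvLaplacian, sum_add_distrib]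
  map_smul' c p := by simp [mvLaplacian, smul_sum]

@[simp]
lemma mvLaplacianₗ_apply (p : MvPolynomial (Fin d) ℝ) : mvLaplacianₗ d p = mvLaplacian p := rfl

lemma mvLaplacian_zero : mvLaplacian (0 : MvPolynomial (Fin d) ℝ) = 0 :=
  map_zero (mvLaplacianₗ d)

lemma mvLaplacian_sub (p q : MvPolynomial (Fin d) ℝ) :
    mvLaplacian (p - q) = mvLaplacian p - mvLaplacian q :=
  map_sub (mvLaplacianₗ d) p q

lemma mvLaplacian_add (p q : MvPolynomial (Fin d) ℝ) :
    mvLaplacian (p + q) = mvLaplacian p + mvLaplacian q :=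
  map_add (mvLaplacianₗ d) p q

lemma mvLaplacian_smul (c : ℝ) (p : MvPolynomial (Fin d) ℝ) :
    mvLaplacian (c • p) = c • mvLaplacian p :=
  map_smul (mvLaplacianₗ d) c p

lemma mvLaplacian_neg (p : MvPolynomial (Fin d) ℝ) : mvLaplacian (-p) = -mvLaplacian p :=
  map_neg (mvLaplacianₗ d) p

theorem isHomogeneous_mvLaplacian {p : MvPolynomial (Fin d) ℝ} {n : ℕ}
    (hp : p.IsHomogeneous n) : (mvLaplacian p).IsHomogeneous (n - 2) :=
  IsHomogeneous.sum _ _ _ fun j _ => by simpa [Nat.sub_sub] using hp.pderiv.pderiv (i := j)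

lemma mvLaplacian_eq_zero_of_lt_two {p : MvPolynomial (Fin d) ℝ} {m : ℕ} (hm : m < 2)
    (hp : p.IsHomogeneous m) : mvLaplacian p = 0 := by
  refine sum_eq_zero fun j _ => ?_
  have h0 : (pderiv j p).IsHomogeneous 0 := by
    simpa [show m - 1 = 0 by omega] using hp.pderiv (i := j)
  rw [← totalDegree_zero_iff_isHomogeneous, totalDegree_eq_zero_iff_eq_C] at h0
  rw [h0, pderiv_C]

noncomputable def normSqPoly (d : ℕ) : MvPolynomial (Fin d) ℝ := ∑ j, X j ^ 2

lemma eval_normSqPoly (x : Fin d → ℝ) : eval x (normSqPoly d) = ∑ j, x j ^ 2 := by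
  simp [normSqPoly]

lemma isHomogeneous_normSqPoly : (normSqPoly d).IsHomogeneous 2 :=
  IsHomogeneous.sum _ _ _ fun j _ => isHomogeneous_X_pow j 2

lemma pderiv_normSqPoly (j : Fin d) : pderiv j (normSqPoly d) = 2 * X j := by
  rw [normSqPoly, map_sum, sum_eq_single j (fun k _ hk => by simp [pderiv_X_of_ne hk]) (by simp)]
  simp

lemma mvLaplacian_normSqPoly_mul {q : MvPolynomial (Fin d) ℝ} {m : ℕ} (hq : q.IsHomogeneous m) :
    mvLaplacian (normSqPoly d * q) = (2 * d + 4 * m : ℝ) • q + normSqPoly d * mvLaplacian q := by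
  have hj (j : Fin d) : pderiv j (pderiv j (normSqPoly d * q)) =
      2 * q + 4 * (X j * pderiv j q) + normSqPoly d * pderiv j (pderiv j q) := by
    have h2 : pderiv j (2 : MvPolynomial (Fin d) ℝ) = 0 := (pderiv j).map_natCast 2
    simp only [pderiv_mul, pderiv_normSqPoly, map_add, h2, pderiv_X_self]
    ring
  simp only [mvLaplacian, hj, sum_add_distrib, ← mul_sum, hq.sum_X_mul_pderiv, sum_const,
    card_univ, Fintype.card_fin, smul_eq_C_mul, nsmul_eq_mul]
  simp only [map_add, map_mul, map_natCast, map_ofNat]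
  ring

lemma eq_zero_of_smul_add_normSqPoly_mul_mvLaplacian_eq_zero {q : MvPolynomial (Fin d) ℝ}
    {m : ℕ} (hq : q.IsHomogeneous m) {c : ℝ} (hc : 0 < c)
    (h : c • q + normSqPoly d * mvLaplacian q = 0) : q = 0 := by
  induction m using Nat.strong_induction_on generalizing q c with
  | _ m ih =>
  -- Applying `Δ` gives the same identity for `Δq`, of degree `m - 2`, with constant
  -- `c + 2d + 4(m - 2)`.
  suffices mvLaplacian q = 0 by
    rw [this, mul_zero, add_zero] at h
    exact (smul_eq_zero.mp h).resolve_left hc.ne'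
  rcases lt_or_ge m 2 with hm | hm
  · exact mvLaplacian_eq_zero_of_lt_two hm hq
  · have hΔq := isHomogeneous_mvLaplacian hq
    refine ih (m - 2) (by omega) hΔq (c := c + (2 * d + 4 * (m - 2 : ℕ))) (by positivity) ?_
    have := congrArg mvLaplacian h
    rwa [mvLaplacian_add, mvLaplacian_smul, mvLaplacian_normSqPoly_mul hΔq,
      ← add_assoc, ← add_smul, mvLaplacian_zero] at this

lemma eq_zero_of_mvLaplacian_normSqPoly_mul_eq_zero (hd : 0 < d) {q : MvPolynomial (Fin d) ℝ}
    {m : ℕ} (hq : q.IsHomogeneous m) (h : mvLaplacian (normSqPoly d * q) = 0) : q = 0 := by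
  rw [mvLaplacian_normSqPoly_mul hq] at h
  exact eq_zero_of_smul_add_normSqPoly_mul_mvLaplacian_eq_zero hq (by positivity) h

lemma exists_mvLaplacian_normSqPoly_mul_eq (hd : 0 < d) {r : MvPolynomial (Fin d) ℝ} {m : ℕ}
    (hr : r.IsHomogeneous m) :
    ∃ q : MvPolynomial (Fin d) ℝ, q.IsHomogeneous m ∧ mvLaplacian (normSqPoly d * q) = r := by
  let V := homogeneousSubmodule (Fin d) ℝ m
  have : Module.Finite ℝ V := Module.Finite.iff_fg.mpr (homogeneousSubmodule_fg _ _ m)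
  let T : V →ₗ[ℝ] V := (mvLaplacianₗ d ∘ₗ LinearMap.mulLeft ℝ (normSqPoly d)).restrict
    fun q hq => by
      simpa [V, mem_homogeneousSubmodule] using
        isHomogeneous_mvLaplacian (isHomogeneous_normSqPoly.mul hq)
  have hT : Function.Injective T := (injective_iff_map_eq_zero T).mpr fun q hq =>
    Subtype.ext (eq_zero_of_mvLaplacian_normSqPoly_mul_eq_zero hd q.2 (congrArg Subtype.val hq))
  obtain ⟨q, hq⟩ := LinearMap.injective_iff_surjective.mp hT ⟨r, hr⟩
  exact ⟨q, q.2, congrArg Subtype.val hq⟩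

def IsHarmonicFamily (n : ℕ) (h : ℕ → MvPolynomial (Fin d) ℝ) : Prop :=
  ∀ i ≤ n / 2, (h i).IsHomogeneous (n - 2 * i) ∧ mvLaplacian (h i) = 0

noncomputable def normSqPowSum (n : ℕ) (h : ℕ → MvPolynomial (Fin d) ℝ) :
    MvPolynomial (Fin d) ℝ :=
  ∑ i ∈ range (n / 2 + 1), normSqPoly d ^ i * h i

variable {n : ℕ} {g h : ℕ → MvPolynomial (Fin d) ℝ}

lemma IsHarmonicFamily.sub (hg : IsHarmonicFamily n g) (hh : IsHarmonicFamily n h) :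
    IsHarmonicFamily n (g - h) := fun i hi =>
  ⟨(hg i hi).1.sub (hh i hi).1, by
    rw [Pi.sub_apply, mvLaplacian_sub, (hg i hi).2, (hh i hi).2, sub_self]⟩

lemma IsHarmonicFamily.tail (hn : 2 ≤ n) (hh : IsHarmonicFamily n h) :
    IsHarmonicFamily (n - 2) fun i => h (i + 1) := fun i hi => by
  simpa [Nat.sub_sub, mul_add, add_comm] using hh (i + 1) (by omega)

lemma IsHarmonicFamily.cons (hn : 2 ≤ n) {a : MvPolynomial (Fin d) ℝ} (ha : a.IsHomogeneous n)
    (hΔa : mvLaplacian a = 0) (hg : IsHarmonicFamily (n - 2) g) :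
    IsHarmonicFamily n fun | 0 => a | i + 1 => g i
  | 0, _ => ⟨ha, hΔa⟩
  | i + 1, hi => by simpa [Nat.sub_sub, mul_add, add_comm] using hg i (by omega)

lemma IsHarmonicFamily.isHomogeneous_normSqPowSum (hh : IsHarmonicFamily n h) :
    (normSqPowSum n h).IsHomogeneous n :=
  IsHomogeneous.sum _ _ _ fun i hi => by
    simpa [show 2 * i + (n - 2 * i) = n by grind] using
      (isHomogeneous_normSqPoly.pow i).mul (hh i (by grind)).1

lemma normSqPowSum_sub : normSqPowSum n (g - h) = normSqPowSum n g - normSqPowSum n h := by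
  simp [normSqPowSum, mul_sub, sum_sub_distrib]

lemma normSqPowSum_of_lt_two (hn : n < 2) : normSqPowSum n h = h 0 := by
  simp [normSqPowSum, Nat.div_eq_of_lt hn]

lemma normSqPowSum_eq_add (hn : 2 ≤ n) :
    normSqPowSum n h = h 0 + normSqPoly d * normSqPowSum (n - 2) fun i => h (i + 1) := by
  rw [normSqPowSum, normSqPowSum, show n / 2 = (n - 2) / 2 + 1 by omega, sum_range_succ', mul_sum]
  simp only [pow_succ, pow_zero, one_mul, add_comm (h 0)]
  congr 1
  exact sum_congr rfl fun i _ => by ring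

lemma eval_normSqPowSum_of_sum_sq_eq_one {x : Fin d → ℝ} (hx : ∑ j, x j ^ 2 = 1) :
    eval x (normSqPowSum n h) = ∑ i ∈ range (n / 2 + 1), eval x (h i) := by
  simp [normSqPowSum, eval_normSqPoly, hx]

lemma IsHarmonicFamily.eq_zero_of_normSqPowSum_eq_zero (hd : 0 < d) (hg : IsHarmonicFamily n g)
    (h0 : normSqPowSum n g = 0) : ∀ i ≤ n / 2, g i = 0 := by
  induction n using Nat.strong_induction_on generalizing g with
  | _ n ih =>
  rcases lt_or_ge n 2 with hn | hn
  · intro i hi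
    rwa [show i = 0 by omega, ← normSqPowSum_of_lt_two (h := g) hn]
  rw [normSqPowSum_eq_add hn] at h0
  have htail := hg.tail hn
  have hQ : normSqPowSum (n - 2) (fun i => g (i + 1)) = 0 := by
    refine eq_zero_of_mvLaplacian_normSqPoly_mul_eq_zero hd htail.isHomogeneous_normSqPowSum ?_
    rw [eq_neg_of_add_eq_zero_right h0, mvLaplacian_neg, (hg 0 (Nat.zero_le _)).2, neg_zero]
  rintro (_ | i) hi
  · simpa [hQ] using h0
  · exact ih (n - 2) (by omega) htail hQ i (by omega)

lemma exists_isHarmonicFamily_normSqPowSum_eq (hd : 0 < d) {p : MvPolynomial (Fin d) ℝ}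
    (hp : p.IsHomogeneous n) : ∃ h, IsHarmonicFamily n h ∧ normSqPowSum n h = p := by
  induction n using Nat.strong_induction_on generalizing p with
  | _ n ih =>
  rcases lt_or_ge n 2 with hn | hn
  · refine ⟨fun _ => p, fun i hi => ⟨?_, mvLaplacian_eq_zero_of_lt_two hn hp⟩,
      normSqPowSum_of_lt_two hn⟩
    simpa [show i = 0 by omega] using hp
  obtain ⟨q, hq, hΔq⟩ := exists_mvLaplacian_normSqPoly_mul_eq hd (isHomogeneous_mvLaplacian hp)
  obtain ⟨g, hg, rfl⟩ := ih (n - 2) (by omega) hq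
  have hhead : (p - normSqPoly d * normSqPowSum (n - 2) g).IsHomogeneous n := by
    refine hp.sub ?_
    simpa [show 2 + (n - 2) = n by omega] using isHomogeneous_normSqPoly.mul hq
  refine ⟨_, hg.cons hn hhead (by rw [mvLaplacian_sub, hΔq, sub_self]), ?_⟩
  rw [normSqPowSum_eq_add hn, sub_add_cancel]

end

/-- Let `d ≥ 2` and let `p` be a real polynomial in `d` variables that is homogeneous of degree
`n`.  Then there exist harmonic polynomials `h_{n−2i}`, each homogeneous of degree `n − 2i` for
`i = 0, 1, …, ⌊n/2⌋`, such that `p(x) = Σ_{i=0}^{⌊n/2⌋} h_{n−2i}(x)` for every `x ∈ ℝ^d` with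
`‖x‖ = 1`; moreover, the polynomials `h_{n−2i}` with this property are unique. -/
theorem homogeneous_eq_sum_harmonic_on_sphere_unique (d n : ℕ) (hd : 2 ≤ d)
    (p : MvPolynomial (Fin d) ℝ) (hp : p.IsHomogeneous n) :
    ∃ h : ℕ → MvPolynomial (Fin d) ℝ,
      ((∀ i ≤ n / 2, (h i).IsHomogeneous (n - 2 * i) ∧ mvLaplacian (h i) = 0) ∧
        ∀ x : Fin d → ℝ, ∑ j, x j ^ 2 = 1 →
          eval x p = ∑ i ∈ Finset.range (n / 2 + 1), eval x (h i)) ∧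
      ∀ h' : ℕ → MvPolynomial (Fin d) ℝ,
        ((∀ i ≤ n / 2, (h' i).IsHomogeneous (n - 2 * i) ∧ mvLaplacian (h' i) = 0) ∧
          ∀ x : Fin d → ℝ, ∑ j, x j ^ 2 = 1 →
            eval x p = ∑ i ∈ Finset.range (n / 2 + 1), eval x (h' i)) →
        ∀ i ≤ n / 2, h' i = h i := by
  have hd : 0 < d := by omega
  have : Nonempty (Fin d) := ⟨⟨0, hd⟩⟩
  obtain ⟨h, hh, rfl⟩ := exists_isHarmonicFamily_normSqPowSum_eq hd hp
  refine ⟨h, ⟨hh, fun x hx => eval_normSqPowSum_of_sum_sq_eq_one hx⟩, ?_⟩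
  rintro h' ⟨hh' : IsHarmonicFamily n h', hs'⟩ i hi
  have hdiff : normSqPowSum n (h' - h) = 0 := by
    refine (hh'.sub hh).isHomogeneous_normSqPowSum.eq_zero_of_forall_eval_sphere_eq_zero
      fun x hx => ?_
    rw [normSqPowSum_sub, map_sub, eval_normSqPowSum_of_sum_sq_eq_one hx, ← hs' x hx, sub_self]
  exact sub_eq_zero.mp ((hh'.sub hh).eq_zero_of_normSqPowSum_eq_zero hd hdiff i hi)
end

section
/- Let n, N, M be positive integers and σ₀ > 0. Let w ∈ ℝⁿ be a random vector with independent coordinates, each mean-zero σ₀²-sub-Gaussian. Let U₁ ∈ ℝ^{n×N} and U₂ ∈ ℝ^{n×M} be matrices with orthonormal columns such that the column span of U₁ is contained in the column span of U₂, and let D ∈ ℝ^{N×M} satisfy ‖D‖₂ ≤ 4. Put 𝐌 := (1/n) U₁ D U₂ᵀ. Then there exists a constant c > 0 depending only on σ₀ such that with probability at least 1 − exp(−c M): |wᵀ 𝐌 w| ≤ 4 M (σ₀² + 1) / n. -/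
/-!
For `x ∈ ℝⁿ` write `y = U₂ᵀ x`. Since the columns of `U₁` lie in the span of those of `U₂`,
`U₁ = U₂ U₂ᵀ U₁`, so `U₁ᵀ x = (U₂ᵀ U₁)ᵀ y` with `U₂ᵀ U₁` again having orthonormal columns; hence
`|xᵀ U₁ D U₂ᵀ x| = |⟪U₁ᵀ x, D y⟫| ≤ ‖D‖₂ ‖y‖²`, and it suffices to show
`‖U₂ᵀ w‖² < M (σ₀² + 1)` with high probability.

Each functional `⟪u, U₂ᵀ w⟫ = ⟪U₂ u, w⟫` is `‖u‖² σ₀²`-sub-Gaussian. Integrating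
`exp (-‖v‖² + 2√t ⟪U₂ᵀ w, v⟫)` over `v ∈ ℝᴹ` gives `π^{M/2} exp (t ‖U₂ᵀ w‖²)`; exchanging this
Gaussian integral with the expectation bounds `E exp (t ‖U₂ᵀ w‖²) ≤ (1 - 2 t σ₀²)^{-M/2}`.
Chernoff's bound with `t = 1 / (8 (σ₀² + 1)²)` then gives the tail `exp (-t M / 2)`.
-/

open MeasureTheory Matrix

/-- The spectral (ℓ²-operator) norm of a real matrix. -/
noncomputable def specNorm {m n : Type*} [Fintype m] [Fintype n] [DecidableEq n]
    (A : Matrix m n ℝ) : ℝ :=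
  ‖LinearMap.toContinuousLinearMap (Matrix.toEuclideanLin A)‖

open Real ProbabilityTheory WithLp
open scoped NNReal ENNReal

namespace Matrix

variable {l m n : Type*} [Fintype l] [Fintype m] [Fintype n]

lemma inner_toEuclideanLin [DecidableEq m] [DecidableEq n] (A : Matrix m n ℝ)
    (x : EuclideanSpace ℝ n) (y : EuclideanSpace ℝ m) :
    inner ℝ (A.toEuclideanLin x) y = inner ℝ x (Aᵀ.toEuclideanLin y) := by
  rw [← conjTranspose_eq_transpose_of_trivial, toEuclideanLin_conjTranspose_eq_adjoint,
    LinearMap.adjoint_inner_right]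

lemma norm_toEuclideanLin_of_transpose_mul_self [DecidableEq m] [DecidableEq n]
    {U : Matrix m n ℝ} (hU : Uᵀ * U = 1) (x : EuclideanSpace ℝ n) :
    ‖U.toEuclideanLin x‖ = ‖x‖ := by
  have h : inner ℝ (U.toEuclideanLin x) (U.toEuclideanLin x) = inner ℝ x x := by
    rw [inner_toEuclideanLin, ← LinearMap.comp_apply, ← toLpLin_mul, hU, toLpLin_one,
      LinearMap.id_apply]
  rwa [real_inner_self_eq_norm_sq, real_inner_self_eq_norm_sq,
    sq_eq_sq₀ (norm_nonneg _) (norm_nonneg _)] at h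

lemma norm_toEuclideanLin_transpose_le [DecidableEq m] [DecidableEq n] {U : Matrix m n ℝ}
    (hU : Uᵀ * U = 1) (x : EuclideanSpace ℝ m) : ‖Uᵀ.toEuclideanLin x‖ ≤ ‖x‖ := by
  have h : ‖Uᵀ.toEuclideanLin x‖ ^ 2 ≤ ‖Uᵀ.toEuclideanLin x‖ * ‖x‖ :=
    calc ‖Uᵀ.toEuclideanLin x‖ ^ 2 = inner ℝ (U.toEuclideanLin (Uᵀ.toEuclideanLin x)) x := by
          rw [inner_toEuclideanLin, real_inner_self_eq_norm_sq]
      _ ≤ ‖U.toEuclideanLin (Uᵀ.toEuclideanLin x)‖ * ‖x‖ := real_inner_le_norm _ _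
      _ = ‖Uᵀ.toEuclideanLin x‖ * ‖x‖ := by rw [norm_toEuclideanLin_of_transpose_mul_self hU]
  nlinarith [norm_nonneg (Uᵀ.toEuclideanLin x), norm_nonneg x]

lemma mul_transpose_mul_of_range_le [DecidableEq m] [DecidableEq n] {U₁ : Matrix l m ℝ}
    {U₂ : Matrix l n ℝ} (h₂ : U₂ᵀ * U₂ = 1)
    (hr : LinearMap.range U₁.mulVecLin ≤ LinearMap.range U₂.mulVecLin) :
    U₂ * (U₂ᵀ * U₁) = U₁ := by
  refine Matrix.toLin'.injective (LinearMap.ext fun v => ?_)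
  obtain ⟨u, hu⟩ := hr ⟨v, rfl⟩
  simp only [Matrix.toLin'_apply, mulVecLin_apply] at hu ⊢
  rw [← mulVec_mulVec, ← mulVec_mulVec, ← hu, mulVec_mulVec, mulVec_mulVec,
    Matrix.mul_assoc, h₂, Matrix.mul_one]

lemma norm_toEuclideanLin_transpose_le_of_range_le [DecidableEq l] [DecidableEq m]
    [DecidableEq n] {U₁ : Matrix l m ℝ} {U₂ : Matrix l n ℝ} (h₁ : U₁ᵀ * U₁ = 1)
    (h₂ : U₂ᵀ * U₂ = 1) (hr : LinearMap.range U₁.mulVecLin ≤ LinearMap.range U₂.mulVecLin)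
    (x : EuclideanSpace ℝ l) :
    ‖U₁ᵀ.toEuclideanLin x‖ ≤ ‖U₂ᵀ.toEuclideanLin x‖ := by
  have hU := mul_transpose_mul_of_range_le h₂ hr
  have hQ : (U₂ᵀ * U₁)ᵀ * (U₂ᵀ * U₁) = 1 := by
    rw [transpose_mul, transpose_transpose, Matrix.mul_assoc, hU, h₁]
  calc ‖U₁ᵀ.toEuclideanLin x‖ = ‖(U₂ᵀ * U₁)ᵀ.toEuclideanLin (U₂ᵀ.toEuclideanLin x)‖ := by
        rw [← LinearMap.comp_apply, ← toLpLin_mul, ← transpose_mul, hU]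
    _ ≤ ‖U₂ᵀ.toEuclideanLin x‖ := norm_toEuclideanLin_transpose_le hQ _

lemma abs_inner_toEuclideanLin_mul_mul_transpose_le [DecidableEq l] [DecidableEq m]
    [DecidableEq n] {U₁ : Matrix l m ℝ} {U₂ : Matrix l n ℝ} (h₁ : U₁ᵀ * U₁ = 1)
    (h₂ : U₂ᵀ * U₂ = 1) (hr : LinearMap.range U₁.mulVecLin ≤ LinearMap.range U₂.mulVecLin)
    (D : Matrix m n ℝ) (x : EuclideanSpace ℝ l) :
    |inner ℝ x ((U₁ * D * U₂ᵀ).toEuclideanLin x)| ≤ specNorm D * ‖U₂ᵀ.toEuclideanLin x‖ ^ 2 := by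
  set y := U₂ᵀ.toEuclideanLin x
  have hxy : inner ℝ x ((U₁ * D * U₂ᵀ).toEuclideanLin x) =
      inner ℝ (U₁ᵀ.toEuclideanLin x) (D.toEuclideanLin y) := by
    rw [toLpLin_mul, toLpLin_mul, LinearMap.comp_apply, LinearMap.comp_apply, real_inner_comm,
      inner_toEuclideanLin, real_inner_comm]
  calc |inner ℝ x ((U₁ * D * U₂ᵀ).toEuclideanLin x)|
      ≤ ‖U₁ᵀ.toEuclideanLin x‖ * ‖D.toEuclideanLin y‖ := hxy ▸ abs_real_inner_le_norm _ _
    _ ≤ ‖y‖ * (specNorm D * ‖y‖) :=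
        mul_le_mul (norm_toEuclideanLin_transpose_le_of_range_le h₁ h₂ hr x)
          ((LinearMap.toContinuousLinearMap D.toEuclideanLin).le_opNorm y) (norm_nonneg _)
          (norm_nonneg _)
    _ = specNorm D * ‖y‖ ^ 2 := by ring

lemma abs_sum_sum_mul_smul_mul_transpose_mul_le [DecidableEq l] [DecidableEq m]
    [DecidableEq n] {U₁ : Matrix l m ℝ} {U₂ : Matrix l n ℝ} (h₁ : U₁ᵀ * U₁ = 1)
    (h₂ : U₂ᵀ * U₂ = 1) (hr : LinearMap.range U₁.mulVecLin ≤ LinearMap.range U₂.mulVecLin)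
    (D : Matrix m n ℝ) (a : ℝ) (x : l → ℝ) :
    |∑ i, ∑ j, x i * (a • (U₁ * D * U₂ᵀ)) i j * x j| ≤
      |a| * (specNorm D * ‖U₂ᵀ.toEuclideanLin (toLp 2 x)‖ ^ 2) := by
  have hsum : ∑ i, ∑ j, x i * (a • (U₁ * D * U₂ᵀ)) i j * x j =
      a * inner ℝ (toLp 2 x) ((U₁ * D * U₂ᵀ).toEuclideanLin (toLp 2 x)) := by
    simp only [PiLp.inner_apply, toLpLin_toLp, toLin'_apply, RCLike.inner_apply, conj_trivial,
      mulVec, dotProduct, smul_apply, smul_eq_mul, Finset.mul_sum, Finset.sum_mul]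
    exact Finset.sum_congr rfl fun i _ => Finset.sum_congr rfl fun j _ => by ring
  rw [hsum, abs_mul]
  gcongr
  exact abs_inner_toEuclideanLin_mul_mul_transpose_le h₁ h₂ hr D _

end Matrix

namespace ProbabilityTheory.HasSubgaussianMGF

variable {Ω ι : Type*} [MeasurableSpace Ω] {μ : Measure Ω} [Fintype ι] {X : ι → Ω → ℝ}
  {c : ℝ≥0}

lemma lintegral_ofReal_exp_mul_le {Y : Ω → ℝ} (h : HasSubgaussianMGF Y c μ) (t : ℝ) :
    ∫⁻ ω, ENNReal.ofReal (rexp (t * Y ω)) ∂μ ≤ ENNReal.ofReal (rexp (c * t ^ 2 / 2)) := by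
  rw [← ofReal_integral_eq_lintegral_ofReal (h.integrable_exp_mul t)
    (ae_of_all _ fun ω => (exp_pos _).le)]
  exact ENNReal.ofReal_le_ofReal (h.mgf_le t)

lemma inner_of_iIndepFun (h_indep : iIndepFun X μ) (h : ∀ i, HasSubgaussianMGF (X i) c μ)
    (a : EuclideanSpace ℝ ι) :
    HasSubgaussianMGF (fun ω => inner ℝ a (toLp 2 fun i => X i ω)) (‖a‖₊ ^ 2 * c) μ := by
  have hsum := sum_of_iIndepFun
    (h_indep.comp (fun i x => a i * x) fun i => measurable_const_mul (a i))
    (s := Finset.univ) fun i _ => (h i).const_mul (a i)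
  convert hsum using 1
  · ext ω
    simp [PiLp.inner_apply, mul_comm]
  · rw [EuclideanSpace.nnnorm_eq, NNReal.sq_sqrt, Finset.sum_mul]
    congr 1 with i
    simp only [NNReal.coe_mul, NNReal.coe_pow, coe_nnnorm, Real.norm_eq_abs, sq_abs]
    rfl

lemma inner_toEuclideanLin_transpose_of_iIndepFun [DecidableEq ι] {κ : Type*} [Fintype κ]
    [DecidableEq κ] (h_indep : iIndepFun X μ) (h : ∀ i, HasSubgaussianMGF (X i) c μ)
    {U : Matrix ι κ ℝ} (hU : Uᵀ * U = 1) (u : EuclideanSpace ℝ κ) :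
    HasSubgaussianMGF (fun ω => inner ℝ u (Uᵀ.toEuclideanLin (toLp 2 fun i => X i ω)))
      (‖u‖₊ ^ 2 * c) μ := by
  have hu : ‖U.toEuclideanLin u‖₊ = ‖u‖₊ :=
    NNReal.eq (norm_toEuclideanLin_of_transpose_mul_self hU u)
  simpa only [hu, ← inner_toEuclideanLin] using inner_of_iIndepFun h_indep h (U.toEuclideanLin u)

end ProbabilityTheory.HasSubgaussianMGF

lemma inv_one_sub_le_exp {u : ℝ} (hu : u ≤ 1 / 2) :
    (1 - u)⁻¹ ≤ rexp (u + 2 * u ^ 2) := by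
  have hpos : 0 < 1 - u := by linarith
  calc (1 - u)⁻¹ ≤ u + 2 * u ^ 2 + 1 := by
        rw [inv_le_iff_one_le_mul₀' hpos]
        nlinarith [mul_nonneg (sq_nonneg u) (by linarith : 0 ≤ 1 - 2 * u)]
    _ ≤ rexp (u + 2 * u ^ 2) := add_one_le_exp _

lemma exp_neg_mul_mul_one_sub_rpow_le {s t : ℝ} (ht : 0 ≤ t) (h₁ : 4 * t * s ≤ 1)
    (h₂ : 8 * t * s ^ 2 ≤ 1) (M : ℕ) :
    rexp (-t * (M * (s + 1))) * (1 - 2 * t * s) ^ (-(M : ℝ) / 2) ≤ rexp (-(t / 2 * M)) := by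
  have hpos : 0 < 1 - 2 * t * s := by nlinarith
  have hu : (1 - 2 * t * s)⁻¹ ≤ rexp (t * (2 * s + 1)) :=
    (inv_one_sub_le_exp (by linarith)).trans (exp_le_exp.2 (by nlinarith))
  calc rexp (-t * (M * (s + 1))) * (1 - 2 * t * s) ^ (-(M : ℝ) / 2)
      = rexp (-t * (M * (s + 1))) * ((1 - 2 * t * s)⁻¹) ^ ((M : ℝ) / 2) := by
        rw [inv_rpow hpos.le, ← rpow_neg hpos.le, neg_div]
    _ ≤ rexp (-t * (M * (s + 1))) * rexp (t * (2 * s + 1)) ^ ((M : ℝ) / 2) := by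
        gcongr
    _ = rexp (-(t / 2 * M)) := by
        rw [← exp_mul, ← exp_add]
        ring_nf


section GaussianDecoupling

variable {V : Type*} [NormedAddCommGroup V] [InnerProductSpace ℝ V] [FiniteDimensional ℝ V]
  [MeasurableSpace V] [BorelSpace V]

lemma integrable_rexp_neg_mul_sq_norm_add {b : ℝ} (hb : 0 < b) (c : ℝ) (w : V) :
    Integrable (fun v : V => rexp (-b * ‖v‖ ^ 2 + c * inner ℝ w v)) := by
  have hb' : 0 < (b : ℂ).re := hb
  refine (GaussianFourier.integrable_cexp_neg_mul_sq_norm_add hb' c w).norm.congr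
    (ae_of_all _ fun v => ?_)
  dsimp only
  norm_cast
  exact norm_of_nonneg (exp_pos _).le

lemma integral_rexp_neg_mul_sq_norm_add {b : ℝ} (hb : 0 < b) (c : ℝ) (w : V) :
    ∫ v : V, rexp (-b * ‖v‖ ^ 2 + c * inner ℝ w v) =
      (π / b) ^ (Module.finrank ℝ V / 2 : ℝ) * rexp (c ^ 2 * ‖w‖ ^ 2 / (4 * b)) := by
  have hb' : 0 < (b : ℂ).re := hb
  rw [← Complex.ofReal_inj]
  convert GaussianFourier.integral_cexp_neg_mul_sq_norm_add hb' c w using 1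
  · rw [← integral_complex_ofReal]
    push_cast
    rfl
  · rw [Complex.ofReal_mul, ← Complex.ofReal_div, Complex.ofReal_cpow (by positivity)]
    push_cast
    rfl

lemma lintegral_ofReal_exp_neg_mul_sq_norm_add {b : ℝ} (hb : 0 < b) (c : ℝ) (w : V) :
    ∫⁻ v : V, ENNReal.ofReal (rexp (-b * ‖v‖ ^ 2 + c * inner ℝ w v)) =
      ENNReal.ofReal ((π / b) ^ (Module.finrank ℝ V / 2 : ℝ) *
        rexp (c ^ 2 * ‖w‖ ^ 2 / (4 * b))) := by
  rw [← integral_rexp_neg_mul_sq_norm_add hb, ofReal_integral_eq_lintegral_ofReal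
    (integrable_rexp_neg_mul_sq_norm_add hb c w) (ae_of_all _ fun v => (exp_pos _).le)]

lemma lintegral_exp_mul_sq_norm_le {Ω : Type*} [MeasurableSpace Ω] {μ : Measure Ω} [SFinite μ]
    {X : Ω → V} (hX : Measurable X) {σ : ℝ≥0}
    (h : ∀ u, HasSubgaussianMGF (fun ω => inner ℝ u (X ω)) (‖u‖₊ ^ 2 * σ) μ)
    {t : ℝ} (ht : 0 ≤ t) (htσ : 2 * t * σ < 1) :
    ∫⁻ ω, ENNReal.ofReal (rexp (t * ‖X ω‖ ^ 2)) ∂μ ≤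
      ENNReal.ofReal ((1 - 2 * t * σ) ^ (-(Module.finrank ℝ V : ℝ) / 2)) := by
  set d : ℝ := (Module.finrank ℝ V : ℝ)
  set c : ℝ := 2 * √t
  set G : Ω → V → ℝ := fun ω v => rexp (-1 * ‖v‖ ^ 2 + c * inner ℝ (X ω) v)
  have hK : 0 < π ^ (d / 2) := by positivity
  have hb : 0 < 1 - 2 * t * σ := by linarith
  have hG_left (ω : Ω) : ∫⁻ v, ENNReal.ofReal (G ω v) =
      ENNReal.ofReal (π ^ (d / 2)) * ENNReal.ofReal (rexp (t * ‖X ω‖ ^ 2)) := by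
    rw [lintegral_ofReal_exp_neg_mul_sq_norm_add one_pos, ← ENNReal.ofReal_mul hK.le, div_one,
      mul_pow, sq_sqrt ht]
    congr 3
    ring
  have hG_right (v : V) : ∫⁻ ω, ENNReal.ofReal (G ω v) ∂μ ≤
      ENNReal.ofReal (rexp (-(1 - 2 * t * σ) * ‖v‖ ^ 2)) :=
    calc ∫⁻ ω, ENNReal.ofReal (G ω v) ∂μ
        = ENNReal.ofReal (rexp (-1 * ‖v‖ ^ 2)) *
            ∫⁻ ω, ENNReal.ofReal (rexp (c * inner ℝ v (X ω))) ∂μ := by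
          rw [← lintegral_const_mul' _ _ ENNReal.ofReal_ne_top]
          refine lintegral_congr fun ω => ?_
          rw [← ENNReal.ofReal_mul (exp_pos _).le, ← exp_add, real_inner_comm]
      _ ≤ ENNReal.ofReal (rexp (-1 * ‖v‖ ^ 2)) *
            ENNReal.ofReal (rexp (↑(‖v‖₊ ^ 2 * σ) * c ^ 2 / 2)) := by
          gcongr
          exact (h v).lintegral_ofReal_exp_mul_le c
      _ = ENNReal.ofReal (rexp (-(1 - 2 * t * σ) * ‖v‖ ^ 2)) := by
          rw [← ENNReal.ofReal_mul (exp_pos _).le, ← exp_add, mul_pow, sq_sqrt ht]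
          push_cast
          ring_nf
  have hG_meas : Measurable (Function.uncurry fun ω v => ENNReal.ofReal (G ω v)) := by
    fun_prop
  refine (ENNReal.mul_le_mul_iff_right (ENNReal.ofReal_pos.2 hK).ne' ENNReal.ofReal_ne_top).1 ?_
  calc ENNReal.ofReal (π ^ (d / 2)) * ∫⁻ ω, ENNReal.ofReal (rexp (t * ‖X ω‖ ^ 2)) ∂μ
      = ∫⁻ ω, (∫⁻ v, ENNReal.ofReal (G ω v)) ∂μ := by
        rw [← lintegral_const_mul' _ _ ENNReal.ofReal_ne_top]
        exact lintegral_congr fun ω => (hG_left ω).symm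
    _ = ∫⁻ v, ∫⁻ ω, ENNReal.ofReal (G ω v) ∂μ := lintegral_lintegral_swap hG_meas.aemeasurable
    _ ≤ ∫⁻ v : V, ENNReal.ofReal (rexp (-(1 - 2 * t * σ) * ‖v‖ ^ 2)) := lintegral_mono hG_right
    _ = ENNReal.ofReal ((π / (1 - 2 * t * σ)) ^ (d / 2)) := by
        simpa using lintegral_ofReal_exp_neg_mul_sq_norm_add hb 0 (0 : V)
    _ = ENNReal.ofReal (π ^ (d / 2)) * ENNReal.ofReal ((1 - 2 * t * σ) ^ (-d / 2)) := by
        rw [← ENNReal.ofReal_mul hK.le, div_rpow pi_pos.le hb.le, neg_div, rpow_neg hb.le,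
          div_eq_mul_inv]

lemma measure_sq_norm_ge_le {Ω : Type*} [MeasurableSpace Ω] {μ : Measure Ω} [SFinite μ]
    {X : Ω → V} (hX : Measurable X) {σ : ℝ≥0}
    (h : ∀ u, HasSubgaussianMGF (fun ω => inner ℝ u (X ω)) (‖u‖₊ ^ 2 * σ) μ)
    {t : ℝ} (ht : 0 ≤ t) (htσ : 2 * t * σ < 1) (ε : ℝ) :
    μ {ω | ε ≤ ‖X ω‖ ^ 2} ≤
      ENNReal.ofReal (rexp (-t * ε) * (1 - 2 * t * σ) ^ (-(Module.finrank ℝ V : ℝ) / 2)) := by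
  have hexp_pos : ENNReal.ofReal (rexp (t * ε)) ≠ 0 := (ENNReal.ofReal_pos.2 (exp_pos _)).ne'
  calc μ {ω | ε ≤ ‖X ω‖ ^ 2}
      ≤ μ {ω | ENNReal.ofReal (rexp (t * ε)) ≤ ENNReal.ofReal (rexp (t * ‖X ω‖ ^ 2))} :=
        measure_mono fun ω (hω : ε ≤ ‖X ω‖ ^ 2) => ENNReal.ofReal_le_ofReal (by gcongr)
    _ ≤ (∫⁻ ω, ENNReal.ofReal (rexp (t * ‖X ω‖ ^ 2)) ∂μ) / ENNReal.ofReal (rexp (t * ε)) :=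
        meas_ge_le_lintegral_div (by fun_prop) hexp_pos ENNReal.ofReal_ne_top
    _ ≤ ENNReal.ofReal ((1 - 2 * t * σ) ^ (-(Module.finrank ℝ V : ℝ) / 2)) /
          ENNReal.ofReal (rexp (t * ε)) := by
        gcongr
        exact lintegral_exp_mul_sq_norm_le hX h ht htσ
    _ = _ := by
        rw [← ENNReal.ofReal_div_of_pos (exp_pos _), div_eq_mul_inv, ← exp_neg, mul_comm, neg_mul]

end GaussianDecoupling

lemma measure_sq_norm_toEuclideanLin_transpose_ge_le {Ω ι κ : Type*} [MeasurableSpace Ω]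
    {P : Measure Ω} [SFinite P] [Fintype ι] [DecidableEq ι] [Fintype κ] [DecidableEq κ]
    {w : ι → Ω → ℝ} (hw_meas : ∀ i, Measurable (w i)) (hw_indep : iIndepFun w P) {σ : ℝ≥0}
    (hw : ∀ i, HasSubgaussianMGF (w i) σ P) {U : Matrix ι κ ℝ} (hU : Uᵀ * U = 1) :
    P {ω | Fintype.card κ * (σ + 1) ≤ ‖Uᵀ.toEuclideanLin (toLp 2 fun i => w i ω)‖ ^ 2} ≤
      ENNReal.ofReal (rexp (-(1 / (16 * (σ + 1) ^ 2) * Fintype.card κ))) := by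
  set t : ℝ := 1 / (8 * (σ + 1) ^ 2) with ht_def
  have ht : 0 < t := by positivity
  have htσ : 4 * t * σ ≤ 1 := by
    rw [ht_def]
    field_simp
    nlinarith [σ.coe_nonneg]
  have htσ₂ : 8 * t * σ ^ 2 ≤ 1 := by
    rw [ht_def]
    field_simp
    nlinarith [σ.coe_nonneg]
  calc _ ≤ ENNReal.ofReal (rexp (-t * (Fintype.card κ * (σ + 1))) *
          (1 - 2 * t * σ) ^ (-(Fintype.card κ : ℝ) / 2)) := by
        simpa only [finrank_euclideanSpace] using measure_sq_norm_ge_le (by fun_prop)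
          (HasSubgaussianMGF.inner_toEuclideanLin_transpose_of_iIndepFun hw_indep hw hU) ht.le
          (by linarith) _
    _ ≤ ENNReal.ofReal (rexp (-(t / 2 * Fintype.card κ))) :=
        ENNReal.ofReal_le_ofReal (exp_neg_mul_mul_one_sub_rpow_le ht.le htσ htσ₂ _)
    _ = _ := by
        rw [ht_def]
        congr 4
        field_simp
        ring

theorem subgaussian_quadratic_form_subspace_bound_general (σ₀ : ℝ) :
    ∃ c > (0 : ℝ),
      ∀ (n N M : ℕ), 0 < n → 0 < N → 0 < M →
      ∀ (Ω : Type) (_ : MeasurableSpace Ω) (P : Measure Ω), IsProbabilityMeasure P →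
      ∀ w : Fin n → Ω → ℝ, (∀ i, Measurable (w i)) →
        ProbabilityTheory.iIndepFun w P →
        (∀ (i : Fin n) (l : ℝ),
          Integrable (fun ω => Real.exp (l * w i ω)) P ∧
            ∫ ω, Real.exp (l * w i ω) ∂P ≤ Real.exp (l ^ 2 * σ₀ ^ 2 / 2)) →
      ∀ (U₁ : Matrix (Fin n) (Fin N) ℝ) (U₂ : Matrix (Fin n) (Fin M) ℝ)
        (D : Matrix (Fin N) (Fin M) ℝ),
        U₁ᵀ * U₁ = 1 → U₂ᵀ * U₂ = 1 →
        LinearMap.range U₁.mulVecLin ≤ LinearMap.range U₂.mulVecLin →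
        specNorm D ≤ 4 →
        P {ω | |∑ i, ∑ j, w i ω * ((n : ℝ)⁻¹ • (U₁ * D * U₂ᵀ)) i j * w j ω| ≤
              4 * M * (σ₀ ^ 2 + 1) / n} ≥
          ENNReal.ofReal (1 - Real.exp (-(c * M))) := by
  have hσ : ((σ₀ ^ 2).toNNReal : ℝ) = σ₀ ^ 2 := Real.coe_toNNReal _ (sq_nonneg σ₀)
  refine ⟨1 / (16 * (σ₀ ^ 2 + 1) ^ 2), by positivity, ?_⟩
  intro n N M _ _ _ Ω _ P _ w hw_meas hw_indep hw_sub U₁ U₂ D h₁ h₂ hr hD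
  have hw (i : Fin n) : HasSubgaussianMGF (w i) (σ₀ ^ 2).toNNReal P :=
    ⟨fun l => (hw_sub i l).1, fun l => (hw_sub i l).2.trans_eq (by rw [hσ, mul_comm])⟩
  have htail := measure_sq_norm_toEuclideanLin_transpose_ge_le hw_meas hw_indep hw h₂
  rw [hσ, Fintype.card_fin] at htail
  set bad := {ω | M * (σ₀ ^ 2 + 1) ≤ ‖U₂ᵀ.toEuclideanLin (toLp 2 fun i => w i ω)‖ ^ 2}
  have hgood : badᶜ ⊆ {ω | |∑ i, ∑ j, w i ω * ((n : ℝ)⁻¹ • (U₁ * D * U₂ᵀ)) i j * w j ω| ≤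
      4 * M * (σ₀ ^ 2 + 1) / n} := by
    intro ω hω
    simp only [bad, Set.mem_compl_iff, Set.mem_ofPred_eq, not_le] at hω
    refine (abs_sum_sum_mul_smul_mul_transpose_mul_le h₁ h₂ hr D _ _).trans ?_
    rw [abs_inv, Nat.abs_cast, inv_mul_eq_div, mul_assoc]
    gcongr
  calc ENNReal.ofReal (1 - rexp (-(1 / (16 * (σ₀ ^ 2 + 1) ^ 2) * M)))
      = 1 - ENNReal.ofReal (rexp (-(1 / (16 * (σ₀ ^ 2 + 1) ^ 2) * M))) := by
        rw [ENNReal.ofReal_sub _ (exp_pos _).le, ENNReal.ofReal_one]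
    _ ≤ 1 - P bad := tsub_le_tsub_left htail 1
    _ = P badᶜ := (prob_compl_eq_one_sub (measurableSet_le (by fun_prop) (by fun_prop))).symm
    _ ≤ _ := measure_mono hgood

/-- Let `w ∈ ℝⁿ` be a random vector with independent coordinates, each mean-zero
`σ₀²`-sub-Gaussian.  Let `U₁ ∈ ℝ^{n×N}`, `U₂ ∈ ℝ^{n×M}` have orthonormal columns with the column
span of `U₁` contained in that of `U₂`, and let `D ∈ ℝ^{N×M}` satisfy `‖D‖₂ ≤ 4`.  Put
`𝐌 := (1/n) U₁ D U₂ᵀ`.  Then there is a constant `c > 0` depending only on `σ₀` such that with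
probability at least `1 − exp(−cM)` : `|wᵀ 𝐌 w| ≤ 4 M (σ₀² + 1)/n`. -/
theorem subgaussian_quadratic_form_subspace_bound (σ₀ : ℝ) (hσ₀ : 0 < σ₀) :
    ∃ c > (0 : ℝ),
      ∀ (n N M : ℕ), 0 < n → 0 < N → 0 < M →
      ∀ (Ω : Type) (_ : MeasurableSpace Ω) (P : Measure Ω), IsProbabilityMeasure P →
      ∀ w : Fin n → Ω → ℝ, (∀ i, Measurable (w i)) →
        ProbabilityTheory.iIndepFun w P →
        (∀ (i : Fin n) (l : ℝ),
          Integrable (fun ω => Real.exp (l * w i ω)) P ∧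
            ∫ ω, Real.exp (l * w i ω) ∂P ≤ Real.exp (l ^ 2 * σ₀ ^ 2 / 2)) →
      ∀ (U₁ : Matrix (Fin n) (Fin N) ℝ) (U₂ : Matrix (Fin n) (Fin M) ℝ)
        (D : Matrix (Fin N) (Fin M) ℝ),
        U₁ᵀ * U₁ = 1 → U₂ᵀ * U₂ = 1 →
        LinearMap.range U₁.mulVecLin ≤ LinearMap.range U₂.mulVecLin →
        specNorm D ≤ 4 →
        P {ω | |∑ i, ∑ j, w i ω * ((n : ℝ)⁻¹ • (U₁ * D * U₂ᵀ)) i j * w j ω| ≤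
              4 * M * (σ₀ ^ 2 + 1) / n} ≥
          ENNReal.ofReal (1 - Real.exp (-(c * M))) :=
  subgaussian_quadratic_form_subspace_bound_general σ₀
end

section
/- Let H be a separable real Hilbert space and let X₁, …, X_m be i.i.d. Bochner-integrable H-valued random variables such that ‖X_r‖_H ≤ c almost surely for some constant c > 0. Then for every r > 0: P( ‖(1/m) Σ_{r=1}^m X_r − E[X₁]‖_H > r ) ≤ 2 exp( − m r² / (8 c²) ). -/
open MeasureTheory

/-!
Pinelis' argument. Since `u ↦ cosh √u` is convex, for `‖v‖ ≤ b` the value `cosh ‖x + v‖` lies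
below a chord whose only dependence on `v` is through the linear term `⟪x, v⟫`; averaging over a
mean-zero `v` gives `E cosh ‖x + v‖ ≤ cosh ‖x‖ cosh b`. Integrating out independent centred
summands one at a time yields `E cosh (λ ‖∑ Yᵢ‖) ≤ cosh (λ b) ^ n ≤ exp (n λ² b² / 2)`, and
Markov's inequality with an optimized `λ` gives the sub-Gaussian tail.
-/

open Real RealInnerProductSpace
open scoped Nat

theorem hasSum_cosh_sqrt {u : ℝ} (hu : 0 ≤ u) :
    HasSum (fun k : ℕ => u ^ k / (2 * k)!) (cosh √u) := by
  simpa only [pow_mul, sq_sqrt hu] using hasSum_cosh √u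

theorem convexOn_cosh_sqrt : ConvexOn ℝ (Set.Ici 0) fun u => cosh √u := by
  refine ⟨convex_Ici 0, fun x hx y hy a b ha hb hab => ?_⟩
  refine hasSum_le (fun k => ?_) (hasSum_cosh_sqrt (convex_Ici 0 hx hy ha hb hab))
    (((hasSum_cosh_sqrt hx).mul_left a).add ((hasSum_cosh_sqrt hy).mul_left b))
  have hpow := (convexOn_pow k).2 hx hy ha hb hab
  simp only [smul_eq_mul] at hpow ⊢
  rw [mul_div_assoc', mul_div_assoc', ← add_div]
  gcongr

theorem cosh_norm_add_le {H : Type*} [NormedAddCommGroup H] [InnerProductSpace ℝ H]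
    (x v : H) {b : ℝ} (hb : 0 < b) (hv : ‖v‖ ≤ b) :
    cosh ‖x + v‖ ≤ cosh ‖x‖ * cosh b + ⟪x, v⟫ * (sinh ‖x‖ * sinh b / (‖x‖ * b)) := by
  rcases eq_or_ne x 0 with rfl | hx
  · simpa [cosh_le_cosh, abs_of_pos hb] using hv
  set n := ‖x‖
  have hn : 0 < n := norm_pos_iff.2 hx
  set s := ⟪x, v⟫ / (2 * n * b)
  have hinner : ⟪x, v⟫ = 2 * n * b * s := (mul_div_cancel₀ _ (by positivity)).symm
  have hs : |s| ≤ 1 / 2 := by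
    rw [abs_div, abs_of_pos (by positivity : 0 < 2 * n * b)]
    refine div_le_of_le_mul₀ (by positivity) (by norm_num) ?_
    calc |⟪x, v⟫| ≤ n * ‖v‖ := abs_real_inner_le_norm x v
      _ ≤ 1 / 2 * (2 * n * b) := by nlinarith
  obtain ⟨hs₁, hs₂⟩ := abs_le.1 hs
  -- `‖x + v‖² ≤ n² + 2⟪x, v⟫ + b² = (1/2 - s) (n - b)² + (1/2 + s) (n + b)²`
  have hconv := convexOn_cosh_sqrt.2 (Set.mem_Ici.2 (sq_nonneg (n - b)))
    (Set.mem_Ici.2 (sq_nonneg (n + b))) (by linarith : 0 ≤ 1 / 2 - s)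
    (by linarith : 0 ≤ 1 / 2 + s) (by ring)
  simp only [smul_eq_mul, sqrt_sq_eq_abs, cosh_abs] at hconv
  calc cosh ‖x + v‖ ≤ cosh √((1 / 2 - s) * (n - b) ^ 2 + (1 / 2 + s) * (n + b) ^ 2) := by
        rw [cosh_le_cosh, abs_norm, abs_of_nonneg (sqrt_nonneg _)]
        refine le_sqrt_of_sq_le ?_
        rw [norm_add_sq_real, hinner]
        nlinarith [norm_nonneg v]
    _ ≤ (1 / 2 - s) * cosh (n - b) + (1 / 2 + s) * cosh (n + b) := hconv
    _ = cosh n * cosh b + ⟪x, v⟫ * (sinh n * sinh b / (n * b)) := by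
        rw [hinner, cosh_add, cosh_sub]
        field_simp
        ring

theorem cosh_pow_div_cosh_le (n : ℕ) (s u : ℝ) :
    cosh s ^ n / cosh u ≤ 2 * exp (n * s ^ 2 / 2 - u) := by
  have hu : exp u / 2 ≤ cosh u := by
    rw [cosh_eq]
    linarith [exp_pos (-u)]
  calc cosh s ^ n / cosh u ≤ exp (s ^ 2 / 2) ^ n / (exp u / 2) := by
        gcongr
        exact cosh_le_exp_half_sq s
    _ = 2 * exp (n * s ^ 2 / 2 - u) := by
        rw [mul_div_assoc, exp_sub, exp_nat_mul]
        field_simp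

open ProbabilityTheory
open scoped ENNReal

section Probability

variable {Ω : Type*} [MeasurableSpace Ω] {P : Measure Ω} [IsProbabilityMeasure P]

theorem ProbabilityTheory.IndepFun.lintegral_comp_eq_lintegral_lintegral
    {E F : Type*} [MeasurableSpace E] [MeasurableSpace F] {T : Ω → E} {Y : Ω → F}
    (h : IndepFun T Y P) (hT : Measurable T) (hY : Measurable Y) {g : E × F → ℝ≥0∞}
    (hg : Measurable g) :
    ∫⁻ ω, g (T ω, Y ω) ∂P = ∫⁻ ω, ∫⁻ ω', g (T ω, Y ω') ∂P ∂P := by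
  calc ∫⁻ ω, g (T ω, Y ω) ∂P = ∫⁻ p, g p ∂((P.map T).prod (P.map Y)) := by
        rw [← h.map_prod_eq_prod_map_map hT.aemeasurable hY.aemeasurable,
          lintegral_map hg (hT.prodMk hY)]
    _ = ∫⁻ t, ∫⁻ u, g (t, u) ∂(P.map Y) ∂(P.map T) := lintegral_prod _ hg.aemeasurable
    _ = ∫⁻ ω, ∫⁻ ω', g (T ω, Y ω') ∂P ∂P := by
        rw [lintegral_map hg.lintegral_prod_right' hT]
        exact lintegral_congr fun ω => lintegral_map (hg.comp measurable_prodMk_left) hY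

variable {H : Type*} [NormedAddCommGroup H] [InnerProductSpace ℝ H] [CompleteSpace H]
  [SecondCountableTopology H] [MeasurableSpace H] [BorelSpace H]

theorem lintegral_cosh_norm_add_le {Y : Ω → H} (hY : Measurable Y)
    (hY0 : ∫ ω, Y ω ∂P = 0) {b : ℝ} (hb : 0 < b) (hbd : ∀ᵐ ω ∂P, ‖Y ω‖ ≤ b) (x : H) :
    ∫⁻ ω, ENNReal.ofReal (cosh ‖x + Y ω‖) ∂P ≤ ENNReal.ofReal (cosh ‖x‖ * cosh b) := by
  have hYint : Integrable Y P := .of_bound hY.aestronglyMeasurable b hbd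
  have hcosh_int : Integrable (fun ω => cosh ‖x + Y ω‖) P := by
    refine .of_bound (by fun_prop) (cosh (‖x‖ + b)) ?_
    filter_upwards [hbd] with ω hω
    rw [norm_of_nonneg (cosh_pos _).le, cosh_le_cosh, abs_norm, abs_of_nonneg (by positivity)]
    exact (norm_add_le _ _).trans (by linarith)
  rw [← ofReal_integral_eq_lintegral_ofReal hcosh_int (.of_forall fun ω => (cosh_pos _).le)]
  refine ENNReal.ofReal_le_ofReal ?_
  calc ∫ ω, cosh ‖x + Y ω‖ ∂P
      ≤ ∫ ω, (cosh ‖x‖ * cosh b + ⟪x, Y ω⟫ * (sinh ‖x‖ * sinh b / (‖x‖ * b))) ∂P := by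
        refine integral_mono_ae hcosh_int ?_ ?_
        · exact (integrable_const _).add ((hYint.const_inner x).mul_const _)
        · filter_upwards [hbd] with ω hω using cosh_norm_add_le x (Y ω) hb hω
    _ = cosh ‖x‖ * cosh b := by
        rw [integral_add (integrable_const _) ((hYint.const_inner x).mul_const _),
          integral_const, integral_mul_const, integral_inner hYint, hY0]
        simp

variable {ι : Type*}

theorem lintegral_cosh_norm_sum_le {Y : ι → Ω → H} (hmeas : ∀ i, Measurable (Y i))
    (hindep : iIndepFun Y P) (h0 : ∀ i, ∫ ω, Y i ω ∂P = 0) {b : ℝ} (hb : 0 < b)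
    (hbd : ∀ i, ∀ᵐ ω ∂P, ‖Y i ω‖ ≤ b) (s : Finset ι) :
    ∫⁻ ω, ENNReal.ofReal (cosh ‖∑ i ∈ s, Y i ω‖) ∂P ≤ ENNReal.ofReal (cosh b) ^ s.card := by
  classical
  induction s using Finset.induction_on with
  | empty => simp
  | insert a s ha ih =>
    have hsum : Measurable (∑ i ∈ s, Y i) := by
      simpa only [← Finset.sum_apply] using Finset.measurable_sum s fun i _ => hmeas i
    have hg : Measurable fun p : H × H => ENNReal.ofReal (cosh ‖p.1 + p.2‖) := by fun_prop
    calc ∫⁻ ω, ENNReal.ofReal (cosh ‖∑ i ∈ insert a s, Y i ω‖) ∂P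
        = ∫⁻ ω, ∫⁻ ω', ENNReal.ofReal (cosh ‖(∑ i ∈ s, Y i) ω + Y a ω'‖) ∂P ∂P := by
          simp_rw [Finset.sum_insert ha, add_comm (Y a _)]
          simpa only [Finset.sum_apply] using
            (hindep.indepFun_finsetSum_of_notMem hmeas ha).lintegral_comp_eq_lintegral_lintegral
              hsum (hmeas a) hg
      _ ≤ ∫⁻ ω, ENNReal.ofReal (cosh ‖(∑ i ∈ s, Y i) ω‖) * ENNReal.ofReal (cosh b) ∂P := by
          refine lintegral_mono fun ω => ?_
          rw [← ENNReal.ofReal_mul (cosh_pos _).le]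
          exact lintegral_cosh_norm_add_le (hmeas a) (h0 a) hb (hbd a) _
      _ ≤ ENNReal.ofReal (cosh b) ^ (insert a s).card := by
          rw [lintegral_mul_const _ (by fun_prop), Finset.card_insert_of_notMem ha, pow_succ]
          gcongr
          simpa only [Finset.sum_apply] using ih

theorem measure_norm_sum_ge_le_of_iIndepFun [Fintype ι] [Nonempty ι] {Y : ι → Ω → H}
    (hmeas : ∀ i, Measurable (Y i)) (hindep : iIndepFun Y P) (h0 : ∀ i, ∫ ω, Y i ω ∂P = 0)
    {b : ℝ} (hb : 0 < b) (hbd : ∀ i, ∀ᵐ ω ∂P, ‖Y i ω‖ ≤ b) {t : ℝ} (ht : 0 < t) :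
    P {ω | t ≤ ‖∑ i, Y i ω‖} ≤
      ENNReal.ofReal (2 * exp (-t ^ 2 / (2 * Fintype.card ι * b ^ 2))) := by
  set n := Fintype.card ι
  have hn : (0 : ℝ) < n := by simp [n, Fintype.card_pos]
  -- `l` minimizes the Chernoff exponent `n l² b² / 2 - l t`
  set l := t / (n * b ^ 2)
  have hl : 0 < l := by positivity
  have hmoment := lintegral_cosh_norm_sum_le (Y := fun i ω => l • Y i ω)
    (fun i => (hmeas i).const_smul l)
    (hindep.comp (fun _ v => l • v) fun _ => measurable_const_smul l)
    (fun i => by rw [integral_smul, h0 i, smul_zero]) (mul_pos hl hb)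
    (fun i => (hbd i).mono fun ω hω => by rw [norm_smul, norm_of_nonneg hl.le]; gcongr)
    Finset.univ
  simp only [← Finset.smul_sum, norm_smul, norm_of_nonneg hl.le, Finset.card_univ] at hmoment
  have hmarkov := mul_meas_ge_le_lintegral₀ (μ := P)
    (f := fun ω => ENNReal.ofReal (cosh (l * ‖∑ i, Y i ω‖))) (by fun_prop)
    (ENNReal.ofReal (cosh (l * t)))
  calc P {ω | t ≤ ‖∑ i, Y i ω‖}
      ≤ P {ω | ENNReal.ofReal (cosh (l * t)) ≤ ENNReal.ofReal (cosh (l * ‖∑ i, Y i ω‖))} := by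
        refine measure_mono fun ω (hω : t ≤ _) => ENNReal.ofReal_le_ofReal ?_
        rw [cosh_le_cosh, abs_of_pos (by positivity), abs_of_nonneg (by positivity)]
        gcongr
    _ ≤ ENNReal.ofReal (cosh (l * b)) ^ n / ENNReal.ofReal (cosh (l * t)) := by
        rw [ENNReal.le_div_iff_mul_le (.inl (ENNReal.ofReal_pos.2 (cosh_pos _)).ne')
          (.inl ENNReal.ofReal_ne_top), mul_comm]
        exact hmarkov.trans hmoment
    _ = ENNReal.ofReal (cosh (l * b) ^ n / cosh (l * t)) := by
        rw [ENNReal.ofReal_div_of_pos (cosh_pos _), ENNReal.ofReal_pow (cosh_pos _).le]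
    _ ≤ ENNReal.ofReal (2 * exp (n * (l * b) ^ 2 / 2 - l * t)) :=
        ENNReal.ofReal_le_ofReal (cosh_pow_div_cosh_le n _ _)
    _ = ENNReal.ofReal (2 * exp (-t ^ 2 / (2 * n * b ^ 2))) := by
        congr 3
        simp only [l]
        field_simp
        ring

end Probability

theorem hilbert_space_hoeffding_general
    {Ω : Type*} [MeasurableSpace Ω] (P : Measure Ω) [IsProbabilityMeasure P]
    {H : Type*} [NormedAddCommGroup H] [InnerProductSpace ℝ H] [CompleteSpace H]
    [SecondCountableTopology H] [MeasurableSpace H] [BorelSpace H]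
    (m : ℕ) (hm : 0 < m) (X : Fin m → Ω → H)
    (hmeas : ∀ r, Measurable (X r))
    (hindep : ProbabilityTheory.iIndepFun X P)
    (hident : ∀ r, Measure.map (X r) P = Measure.map (X ⟨0, hm⟩) P)
    (c : ℝ) (hc : 0 < c) (hbdd : ∀ r, ∀ᵐ ω ∂P, ‖X r ω‖ ≤ c) :
    ∀ ε > (0 : ℝ),
      P {ω | ‖(m : ℝ)⁻¹ • (∑ r, X r ω) - ∫ ω', X ⟨0, hm⟩ ω' ∂P‖ > ε} ≤
        ENNReal.ofReal (2 * Real.exp (-(m * ε ^ 2) / (8 * c ^ 2))) := by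
  intro ε hε
  set μ := ∫ ω', X ⟨0, hm⟩ ω' ∂P
  have hμ : ‖μ‖ ≤ c := by simpa using norm_integral_le_of_norm_le_const (hbdd ⟨0, hm⟩)
  have hmean (r : Fin m) : ∫ ω, X r ω ∂P = μ :=
    IdentDistrib.integral_eq ⟨(hmeas r).aemeasurable, (hmeas _).aemeasurable, hident r⟩
  have : Nonempty (Fin m) := ⟨⟨0, hm⟩⟩
  have htail := measure_norm_sum_ge_le_of_iIndepFun (P := P) (Y := fun r ω => X r ω - μ)
    (fun r => (hmeas r).sub_const μ)
    (hindep.comp (fun _ v => v - μ) fun _ => measurable_id.sub_const μ)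
    (fun r => by
      rw [integral_sub (.of_bound (hmeas r).aestronglyMeasurable c (hbdd r)) (integrable_const μ),
        hmean r, integral_const, probReal_univ, one_smul, sub_self])
    (by positivity : 0 < 2 * c)
    (fun r => (hbdd r).mono fun ω hω => (norm_sub_le _ _).trans (by linarith))
    (by positivity : 0 < m * ε)
  have hm' : (m : ℝ) ≠ 0 := by positivity
  have hsum (ω : Ω) : ∑ r, (X r ω - μ) = (m : ℝ) • ((m : ℝ)⁻¹ • ∑ r, X r ω - μ) := by
    rw [Finset.sum_sub_distrib, smul_sub, smul_inv_smul₀ hm', Finset.sum_const,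
      Finset.card_univ, Fintype.card_fin, Nat.cast_smul_eq_nsmul]
  calc P {ω | ‖(m : ℝ)⁻¹ • (∑ r, X r ω) - μ‖ > ε}
      ≤ P {ω | m * ε ≤ ‖∑ r, (X r ω - μ)‖} := by
        refine measure_mono fun ω (hω : ε < _) => show (m : ℝ) * ε ≤ _ from ?_
        rw [hsum, norm_smul, Real.norm_natCast]
        gcongr
    _ ≤ _ := htail
    _ = ENNReal.ofReal (2 * Real.exp (-(m * ε ^ 2) / (8 * c ^ 2))) := by
        rw [Fintype.card_fin]
        congr 3
        field_simp
        ring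

/-- Let `H` be a separable real Hilbert space and `X₁, …, X_m` i.i.d. Bochner-integrable
`H`-valued random variables with `‖X_r‖ ≤ c` almost surely.  Then for every `ε > 0`:
`P(‖(1/m) Σ_r X_r − E[X₁]‖ > ε) ≤ 2 exp(−m ε²/(8 c²))`. -/
theorem hilbert_space_hoeffding
    {Ω : Type*} [MeasurableSpace Ω] (P : Measure Ω) [IsProbabilityMeasure P]
    {H : Type*} [NormedAddCommGroup H] [InnerProductSpace ℝ H] [CompleteSpace H]
    [SecondCountableTopology H] [MeasurableSpace H] [BorelSpace H]
    (m : ℕ) (hm : 0 < m) (X : Fin m → Ω → H)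
    (hmeas : ∀ r, Measurable (X r))
    (hindep : ProbabilityTheory.iIndepFun X P)
    (hident : ∀ r, Measure.map (X r) P = Measure.map (X ⟨0, hm⟩) P)
    (hint : ∀ r, Integrable (X r) P)
    (c : ℝ) (hc : 0 < c) (hbdd : ∀ r, ∀ᵐ ω ∂P, ‖X r ω‖ ≤ c) :
    ∀ ε > (0 : ℝ),
      P {ω | ‖(m : ℝ)⁻¹ • (∑ r, X r ω) - ∫ ω', X ⟨0, hm⟩ ω' ∂P‖ > ε} ≤
        ENNReal.ofReal (2 * Real.exp (-(m * ε ^ 2) / (8 * c ^ 2))) :=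
  hilbert_space_hoeffding_general P m hm X hmeas hindep hident c hc hbdd
end
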